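/- Let j ≥ 1 and s ≥ 0 be integers, let w be a word of length n over an alphabet Σ, let f : Σ → Σ be an involution and φ the induced antimorphic involution on words. Let 1 ≤ i ≤ n and suppose m = mp_s^j((w[1..i])^R) is finite and m ≤ cmp_w[i]. Then i ≥ jm, i + m ≤ n, and w[i−jm+1..i+m] = x^j φ(x), where x = w[i−m+1..i] and |x| = m > s. -/

import Mathlib

open List

/-- `x^k`: concatenation of `k` copies of the word `x`. -/
def listPow {α : Type*} (x : List α) (k : ℕ) : List α := (List.replicate k x).flatten

/-- Minimal period `mp_s^k(u)` taking values in `ℕ∞`: the least `m > s` such that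
the prefix of `u` of length `k*m` is the `k`-th power of the prefix of length `m`;
`⊤` if no such `m` exists. -/
noncomputable def minPeriod {α : Type*} (k s : ℕ) (u : List α) : ℕ∞ :=
  sInf {N : ℕ∞ | ∃ m : ℕ, N = (m : ℕ∞) ∧ s < m ∧ k * m ≤ u.length ∧
    listPow (u.take m) k <+: u}

/-- Length of the longest common prefix of two words. -/
def lcpLen {α : Type*} [DecidableEq α] (a b : List α) : ℕ :=
  ((a.zip b).takeWhile fun p => decide (p.1 = p.2)).length

/-- The antimorphic involution on words induced by a letter map `f`. -/
def phi {α : Type*} (f : α → α) (u : List α) : List α := (u.map f).reverse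

/-- Centralized maximal pseudo-palindrome array entry `cmp_w[i]`. -/
noncomputable def cmpArr {α : Type*} (f : α → α) (w : List α) (i : ℕ) : ℕ :=
  sSup {m : ℕ | m ≤ min i (w.length - i) ∧
    phi f ((w.drop (i - m)).take m) = (w.drop i).take m}
/-! The period condition says that the reversed prefix `(w[1..i])^R` begins with `(x^R)^j`, i.e.
that `w[1..i]` ends with `x^j` for `x = w[i−m+1..i]`. A pseudo-palindrome of radius `cmp_w[i]`
centred at `i` restricts to one of radius `m`, so the `m` letters following position `i` spell
`φ(x)`. Concatenating the two factors gives `w[i−jm+1..i+m] = x^j φ(x)`. -/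

section Words

variable {α : Type*}

theorem listPow_length (x : List α) (k : ℕ) : (listPow x k).length = k * x.length := by
  simp [listPow]

theorem listPow_reverse (x : List α) (k : ℕ) : (listPow x k).reverse = listPow x.reverse k := by
  simp [listPow, List.reverse_flatten, List.map_replicate]

theorem phi_drop (f : α → α) {u : List α} {k : ℕ} (hk : k ≤ u.length) :
    phi f (u.drop k) = (phi f u).take (u.length - k) := by
  rw [phi, phi, List.take_reverse, List.length_map, Nat.sub_sub_self hk, List.map_drop]

theorem take_reverse_take {w : List α} {i m : ℕ} (hm : m ≤ i) (hi : i ≤ w.length) :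
    (w.take i).reverse.take m = ((w.drop (i - m)).take m).reverse := by
  rw [List.take_reverse, List.length_take, min_eq_left hi, List.drop_take,
    Nat.sub_sub_self hm]

theorem take_drop_eq_of_isSuffix_take {v w : List α} {i : ℕ} (hi : i ≤ w.length)
    (h : v <:+ w.take i) : (w.drop (i - v.length)).take v.length = v := by
  obtain ⟨t, ht⟩ := h
  have hlen : t.length + v.length = i := by simpa [hi] using congrArg List.length ht
  have hv : v = (w.take i).drop t.length := by rw [← ht, List.drop_left]
  rw [show i - v.length = t.length by omega]
  conv_rhs => rw [hv]
  rw [List.drop_take, show i - t.length = v.length by omega]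

theorem minPeriod_spec {k s m : ℕ} {u : List α} (h : minPeriod k s u = m) :
    s < m ∧ k * m ≤ u.length ∧ listPow (u.take m) k <+: u := by
  have hne : {N : ℕ∞ | ∃ m : ℕ, N = (m : ℕ∞) ∧ s < m ∧ k * m ≤ u.length ∧
      listPow (u.take m) k <+: u}.Nonempty := by
    by_contra hempty
    rw [Set.not_nonempty_iff_eq_empty] at hempty
    rw [minPeriod, hempty, sInf_empty] at h
    exact ENat.top_ne_natCast m h
  obtain ⟨m', hm', hspec⟩ := csInf_mem hne
  rw [← minPeriod, h, Nat.cast_inj] at hm'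
  exact hm' ▸ hspec

theorem cmpArr_spec (f : α → α) (w : List α) (i : ℕ) :
    cmpArr f w i ≤ min i (w.length - i) ∧
      phi f ((w.drop (i - cmpArr f w i)).take (cmpArr f w i)) =
        (w.drop i).take (cmpArr f w i) :=
  Nat.sSup_mem (s := {m : ℕ | m ≤ min i (w.length - i) ∧
      phi f ((w.drop (i - m)).take m) = (w.drop i).take m})
    ⟨0, by simp [phi]⟩ ⟨min i (w.length - i), fun _ hm => hm.1⟩

theorem phi_take_drop_eq_of_le {f : α → α} {w : List α} {i m M : ℕ} (hmM : m ≤ M)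
    (hMi : M ≤ i) (hi : i ≤ w.length)
    (hM : phi f ((w.drop (i - M)).take M) = (w.drop i).take M) :
    phi f ((w.drop (i - m)).take m) = (w.drop i).take m := by
  have hlen : ((w.drop (i - M)).take M).length = M := by
    simp only [List.length_take, List.length_drop, inf_eq_left]
    omega
  have hinner : (w.drop (i - m)).take m = ((w.drop (i - M)).take M).drop (M - m) := by
    rw [List.drop_take, List.drop_drop, Nat.sub_sub_self hmM]
    congr 2
    omega
  rw [hinner, phi_drop f (by omega), hM, hlen, Nat.sub_sub_self hmM, List.take_take,
    min_eq_left hmM]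

theorem phi_take_drop_eq_of_le_cmpArr {f : α → α} {w : List α} {i m : ℕ} (hi : i ≤ w.length)
    (hm : m ≤ cmpArr f w i) :
    m ≤ i ∧ i + m ≤ w.length ∧ phi f ((w.drop (i - m)).take m) = (w.drop i).take m := by
  obtain ⟨hbound, hpal⟩ := cmpArr_spec f w i
  have hMi : cmpArr f w i ≤ i := hbound.trans (min_le_left _ _)
  have hMw : cmpArr f w i ≤ w.length - i := hbound.trans (min_le_right _ _)
  exact ⟨hm.trans hMi, by omega, phi_take_drop_eq_of_le hm hMi hi hpal⟩

end Words

theorem stmt12_general {α : Type*} (j s : ℕ) (f : α → α)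
    (w : List α) (i m : ℕ)
    (hi2 : i ≤ w.length)
    (hm : minPeriod j s ((w.take i).reverse) = (m : ℕ∞))
    (hcmp : m ≤ cmpArr f w i) :
    j * m ≤ i ∧ i + m ≤ w.length ∧ s < m ∧
      ((w.drop (i - m)).take m).length = m ∧
      (w.drop (i - j * m)).take (j * m + m) =
        listPow ((w.drop (i - m)).take m) j ++ phi f ((w.drop (i - m)).take m) := by
  obtain ⟨hsm, hjm, hpow⟩ := minPeriod_spec hm
  obtain ⟨hmi, him, hpal⟩ := phi_take_drop_eq_of_le_cmpArr hi2 hcmp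
  rw [List.length_reverse, List.length_take, min_eq_left hi2] at hjm
  set x := (w.drop (i - m)).take m
  have hx : x.length = m := by
    simp only [List.length_take, List.length_drop, inf_eq_left, x]
    omega
  rw [take_reverse_take hmi hi2, ← listPow_reverse, List.reverse_prefix] at hpow
  have hfactor := take_drop_eq_of_isSuffix_take hi2 hpow
  rw [listPow_length, hx] at hfactor
  refine ⟨hjm, him, hsm, hx, ?_⟩
  rw [List.take_add, hfactor, List.drop_drop, Nat.sub_add_cancel hjm, hpal]

/-- if `m = mp_s^j((w[1..i])^R)` is finite and `m ≤ cmp_w[i]`, then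
`i ≥ jm`, `i + m ≤ n`, and `w[i−jm+1..i+m] = x^j φ(x)` where `x = w[i−m+1..i]`,
`|x| = m > s`. -/
theorem stmt12 {α : Type*} (j s : ℕ) (hj : 1 ≤ j) (f : α → α)
    (hf : Function.Involutive f) (w : List α) (i m : ℕ)
    (hi1 : 1 ≤ i) (hi2 : i ≤ w.length)
    (hm : minPeriod j s ((w.take i).reverse) = (m : ℕ∞))
    (hcmp : m ≤ cmpArr f w i) :
    j * m ≤ i ∧ i + m ≤ w.length ∧ s < m ∧
      ((w.drop (i - m)).take m).length = m ∧
      (w.drop (i - j * m)).take (j * m + m) =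
        listPow ((w.drop (i - m)).take m) j ++ phi f ((w.drop (i - m)).take m) :=
  stmt12_general j s f w i m hi2 hm hcmp
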